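/- If Z = (s₁,s₂,r,h) ∈ H²×H² with |s₁| ≤ 1/2, |s₂| ≤ 1/2, ε₀^{−2} ≤ r ≤ ε₀² and h ≥ 1, then Z ∈ F. Moreover, if all four inequalities are strict then Z lies in the interior of F. -/

import Mathlib

noncomputable section

open scoped Classical
open MeasureTheory

namespace Hilbert

/-- `k₀ = 2` if `k ≡ 1 (mod 4)` and `k₀ = 1` otherwise. -/
def k0 (k : ℕ) : ℝ := if k % 4 = 1 then 2 else 1

/-- `ω = (1 + √k)/k₀`. -/
def omg (k : ℕ) : ℝ := (1 + Real.sqrt k) / k0 k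

/-- `ω' = (1 - √k)/k₀`, the algebraic conjugate of `ω`. -/
def omg' (k : ℕ) : ℝ := (1 - Real.sqrt k) / k0 k

/-- The ring `R = ℤ[ω]`, realized inside `ℝ × ℝ` via the pair of real embeddings
`α ↦ (α, α')` of `K = ℚ(√k)`. -/
def R (k : ℕ) : Subring (ℝ × ℝ) := Subring.closure {(omg k, omg' k)}

/-- The ambient space `ℝ⁴`, with coordinates `(x₁, x₂, y₁, y₂)`. -/
abbrev Pt : Type := ℝ × ℝ × ℝ × ℝ

def x1 (p : Pt) : ℝ := p.1
def x2 (p : Pt) : ℝ := p.2.1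
def y1 (p : Pt) : ℝ := p.2.2.1
def y2 (p : Pt) : ℝ := p.2.2.2

/-- `H² × H²`, identified with an open subset of `ℝ⁴`. -/
def HH : Set Pt := {p | 0 < y1 p ∧ 0 < y2 p}

/-- The coordinate `s₁`, determined by `x₁ = s₁ + s₂ ω`, `x₂ = s₁ + s₂ ω'`. -/
def s1 (k : ℕ) (p : Pt) : ℝ := (omg' k * x1 p - omg k * x2 p) / (omg' k - omg k)

/-- The coordinate `s₂`. -/
def s2 (k : ℕ) (p : Pt) : ℝ := (x1 p - x2 p) / (omg k - omg' k)

/-- The ratio `r = y₁/y₂`. -/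
def rr (p : Pt) : ℝ := y1 p / y2 p

/-- The height `h = y₁ y₂`. -/
def hh (p : Pt) : ℝ := y1 p * y2 p

/-- `‖cZ+d‖ = ((cx₁+d)² + c²y₁²)((c'x₂+d')² + c'²y₂²)`, where `c = (c, c')`, `d = (d, d')`
are given by their two real embeddings. -/
def HNorm (c d : ℝ × ℝ) (p : Pt) : ℝ :=
  ((c.1 * x1 p + d.1) ^ 2 + c.1 ^ 2 * y1 p ^ 2) *
    ((c.2 * x2 p + d.2) ^ 2 + c.2 ^ 2 * y2 p ^ 2)

/-- `S = {(c,d) ∈ R² : cR + dR = R}`. -/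
def Spairs (k : ℕ) : Set (R k × R k) := {cd | Ideal.span {cd.1, cd.2} = ⊤}

/-- `V_{c,d}^≥ = {Z ∈ H²×H² : ‖cZ+d‖ ≥ 1}`. -/
def Vge (k : ℕ) (cd : R k × R k) : Set Pt :=
  {p ∈ HH | 1 ≤ HNorm (cd.1 : ℝ × ℝ) (cd.2 : ℝ × ℝ) p}

/-- `V_{c,d}^≤ = {Z ∈ H²×H² : ‖cZ+d‖ ≤ 1}`. -/
def Vle (k : ℕ) (cd : R k × R k) : Set Pt :=
  {p ∈ HH | HNorm (cd.1 : ℝ × ℝ) (cd.2 : ℝ × ℝ) p ≤ 1}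

/-- `V_{c,d} = {Z ∈ H²×H² : ‖cZ+d‖ = 1}`. -/
def Veq (k : ℕ) (cd : R k × R k) : Set Pt :=
  {p ∈ HH | HNorm (cd.1 : ℝ × ℝ) (cd.2 : ℝ × ℝ) p = 1}

/-- `F₀ = {Z ∈ H²×H² : ‖cZ+d‖ ≥ 1 for all (c,d) ∈ S}`. -/
def F0 (k : ℕ) : Set Pt :=
  {p ∈ HH | ∀ cd ∈ Spairs k, 1 ≤ HNorm (cd.1 : ℝ × ℝ) (cd.2 : ℝ × ℝ) p}

/-- `F_∞ = {(s₁,s₂,r,h) : |s₁| ≤ 1/2, |s₂| ≤ 1/2, ε₀⁻² ≤ r ≤ ε₀²}`, where `ε` stands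
for the fundamental unit `ε₀`. -/
def FInf (k : ℕ) (ε : ℝ) : Set Pt :=
  {p ∈ HH | |s1 k p| ≤ 1 / 2 ∧ |s2 k p| ≤ 1 / 2 ∧ (ε ^ 2)⁻¹ ≤ rr p ∧ rr p ≤ ε ^ 2}

/-- `F = F_∞ ∩ F₀`. -/
def F (k : ℕ) (ε : ℝ) : Set Pt := FInf k ε ∩ F0 k

/-- `SL₂(R)`. -/
abbrev SL (k : ℕ) := Matrix.SpecialLinearGroup (Fin 2) (R k)

/-- Möbius action on the upper half-plane: image of `x + y i` under `(a b; c d)`. -/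
def moeb (a b c d x y : ℝ) : ℝ × ℝ :=
  (((a * x + b) * (c * x + d) + a * c * y ^ 2) / ((c * x + d) ^ 2 + c ^ 2 * y ^ 2),
    y / ((c * x + d) ^ 2 + c ^ 2 * y ^ 2))

/-- The action of `γ ∈ SL₂(R)` on `H²×H²`: `γ` acts on the first factor through the first
embedding and through the conjugate matrix `γ'` (second embedding) on the second factor.
This descends to the Hilbert modular group `PSL₂(R)`. -/
def act (k : ℕ) (g : SL k) (p : Pt) : Pt :=
  ((moeb (g.1 0 0 : ℝ × ℝ).1 (g.1 0 1 : ℝ × ℝ).1 (g.1 1 0 : ℝ × ℝ).1 (g.1 1 1 : ℝ × ℝ).1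
      (x1 p) (y1 p)).1,
   (moeb (g.1 0 0 : ℝ × ℝ).2 (g.1 0 1 : ℝ × ℝ).2 (g.1 1 0 : ℝ × ℝ).2 (g.1 1 1 : ℝ × ℝ).2
      (x2 p) (y2 p)).1,
   (moeb (g.1 0 0 : ℝ × ℝ).1 (g.1 0 1 : ℝ × ℝ).1 (g.1 1 0 : ℝ × ℝ).1 (g.1 1 1 : ℝ × ℝ).1
      (x1 p) (y1 p)).2,
   (moeb (g.1 0 0 : ℝ × ℝ).2 (g.1 0 1 : ℝ × ℝ).2 (g.1 1 0 : ℝ × ℝ).2 (g.1 1 1 : ℝ × ℝ).2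
      (x2 p) (y2 p)).2)

/-- The pair of real embeddings of a unit of `R`. -/
def unitVal (k : ℕ) (u : (R k)ˣ) : ℝ × ℝ := ((u : R k) : ℝ × ℝ)

/-- `e` is the fundamental unit of `R`: the smallest unit of `R` greater than `1`
(with respect to the first embedding). -/
def IsFundUnit (k : ℕ) (e : (R k)ˣ) : Prop :=
  1 < (unitVal k e).1 ∧
    ∀ v : (R k)ˣ, 1 < (unitVal k v).1 → (unitVal k e).1 ≤ (unitVal k v).1

/-- The real number `ε₀ > 1`, the fundamental unit under the first embedding. -/
def eps (k : ℕ) (e : (R k)ˣ) : ℝ := (unitVal k e).1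


/-- The norm `N(c) = c c'` of an element of `R` (as a real number). -/
def Nm (k : ℕ) (c : R k) : ℝ := ((c : ℝ × ℝ)).1 * ((c : ℝ × ℝ)).2

/-- A subset `C` of `H²×H²` is hyperbolically bounded if it is bounded in the
Euclidean metric and `y₁, y₂ > ε` on `C` for some `ε > 0`. -/
def HypBounded (C : Set Pt) : Prop :=
  C ⊆ HH ∧ Bornology.IsBounded C ∧ ∃ ε > (0 : ℝ), ∀ p ∈ C, ε < y1 p ∧ ε < y2 p

/-- `V_{C,μ} = {(c,d) ∈ R × R : ‖cZ+d‖ ≤ μ for some Z ∈ C}`. -/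
def VCmu (k : ℕ) (C : Set Pt) (μ : ℝ) : Set (R k × R k) :=
  {cd | ∃ p ∈ C, HNorm (cd.1 : ℝ × ℝ) (cd.2 : ℝ × ℝ) p ≤ μ}

/-- The conditions (8) of Theorem `FiniteSides` on a pair `(c,d) ∈ R²`. -/
def SCond (k : ℕ) (ε : ℝ) (cd : R k × R k) : Prop :=
  cd.1 ≠ 0 ∧ Ideal.span {cd.1, cd.2} = ⊤ ∧
    |Nm k cd.1| ≤ 2 * k / (k0 k) ^ 2 ∧
    |((cd.2 : ℝ × ℝ)).1 / ((cd.1 : ℝ × ℝ)).1| <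
      ε * Real.sqrt (2 * k / (Nm k cd.1 ^ 2 * (k0 k) ^ 2) - (k0 k) ^ 2 / (2 * k)) +
        (1 + omg k) / 2 ∧
    |((cd.2 : ℝ × ℝ)).2 / ((cd.1 : ℝ × ℝ)).2| <
      ε * Real.sqrt (2 * k / (Nm k cd.1 ^ 2 * (k0 k) ^ 2) - (k0 k) ^ 2 / (2 * k)) +
        (1 - omg' k) / 2

/-- `S₁` is a set of representatives, up to multiplication by units of `R`, of the pairs
`(c,d) ∈ R²` satisfying the conditions `SCond`. -/
def IsRepSet (k : ℕ) (ε : ℝ) (S1 : Set (R k × R k)) : Prop :=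
  (∀ cd ∈ S1, SCond k ε cd) ∧
    (∀ cd : R k × R k, SCond k ε cd →
      ∃ ab ∈ S1, ∃ u : (R k)ˣ, cd.1 = (u : R k) * ab.1 ∧ cd.2 = (u : R k) * ab.2) ∧
    (∀ ab ∈ S1, ∀ ab' ∈ S1,
      (∃ u : (R k)ˣ, ab'.1 = (u : R k) * ab.1 ∧ ab'.2 = (u : R k) * ab.2) → ab = ab')

/-- The family `𝒱_∞ = {V_i^± : i = 1,2,3}`. -/
def VfamInf (k : ℕ) (ε : ℝ) : Set (Set Pt) :=
  { {p ∈ HH | s1 k p = 1 / 2}, {p ∈ HH | s1 k p = -(1 / 2)},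
    {p ∈ HH | s2 k p = 1 / 2}, {p ∈ HH | s2 k p = -(1 / 2)},
    {p ∈ HH | rr p = ε ^ 2}, {p ∈ HH | rr p = (ε ^ 2)⁻¹} }

/-- The family `𝒱 = {V_{c,d} : (c,d) ∈ S, c ≠ 0}`. -/
def Vfam (k : ℕ) : Set (Set Pt) :=
  {V | ∃ cd ∈ Spairs k, cd.1 ≠ 0 ∧ V = Veq k cd}

/-- The family `𝓜 = {γ(M) : γ ∈ Γ, M ∈ 𝒱 ∪ 𝒱_∞}`. -/
def Mfam (k : ℕ) (ε : ℝ) : Set (Set Pt) :=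
  {M | ∃ g : SL k, ∃ V ∈ Vfam k ∪ VfamInf k ε, M = act k g '' V}

/-- `ω` as an element of `R`. -/
def omR (k : ℕ) : R k := ⟨(omg k, omg' k), Subring.subset_closure rfl⟩

/-- The side-pairing transformations: `γ ≠ 1` (in `PSL₂(R)`) such that `F ∩ γ⁻¹(F)` has
Hausdorff dimension `3`. -/
def SidePairings (k : ℕ) (ε : ℝ) : Set (SL k) :=
  {g | g ≠ 1 ∧ g.1 ≠ -1 ∧ dimH (F k ε ∩ act k g⁻¹ '' F k ε) = 3}


/-!
For `(c, d) ∈ S` with `c ≠ 0` one has `‖cZ+d‖ ≥ c²y₁² · c'²y₂² = N(c)² h²`, and `N(c)` is a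
nonzero integer because `√k` is irrational; for `c = 0` the element `d` is a unit, so
`‖cZ+d‖ = N(d)² = 1`. Hence `h ≥ 1` puts `Z` in `F₀`. Strict inequalities persist near `Z`
because `s₁`, `s₂`, `h` are continuous and `r` is continuous on `H² × H²`.
-/

section RingOfIntegers

variable {k : ℕ}

lemma exists_int_trace_norm (k : ℕ) :
    ∃ t n : ℤ, omg k + omg' k = t ∧ omg k * omg' k = n := by
  have hsq : Real.sqrt k * Real.sqrt k = k := Real.mul_self_sqrt (Nat.cast_nonneg k)
  unfold omg omg' k0
  split_ifs with h
  · obtain ⟨m, hm⟩ : (4 : ℤ) ∣ 1 - k := by omega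
    have hm' : (1 : ℝ) - k = 4 * m := by exact_mod_cast hm
    exact ⟨1, m, by ring, by linear_combination -hsq / 4 + hm' / 4⟩
  · exact ⟨2, 1 - k, by ring, by push_cast; linear_combination -hsq⟩

lemma exists_eq_int_add_int_mul (z : R k) :
    ∃ a b : ℤ, (z : ℝ × ℝ) = (a + b * omg k, a + b * omg' k) := by
  obtain ⟨t, n, ht, hn⟩ := exists_int_trace_norm k
  obtain ⟨z, hz⟩ := z
  change ∃ a b : ℤ, z = _
  induction hz using Subring.closure_induction with
  | mem x hx => exact ⟨0, 1, by rw [Set.mem_singleton_iff.1 hx]; simp⟩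
  | zero => exact ⟨0, 0, by simp [Prod.ext_iff]⟩
  | one => exact ⟨1, 0, by simp [Prod.ext_iff]⟩
  | add x y _ _ hx hy =>
    obtain ⟨⟨a, b, rfl⟩, ⟨c, d, rfl⟩⟩ := And.intro hx hy
    exact ⟨a + c, b + d, by simp only [Prod.mk_add_mk, Int.cast_add]; ext <;> ring⟩
  | neg x _ hx =>
    obtain ⟨a, b, rfl⟩ := hx
    exact ⟨-a, -b, by simp only [Prod.neg_mk, Int.cast_neg]; ext <;> ring⟩
  | mul x y _ _ hx hy =>
    -- `ω` and `ω'` are the two roots of `X² - t X + n`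
    obtain ⟨⟨a, b, rfl⟩, ⟨c, d, rfl⟩⟩ := And.intro hx hy
    refine ⟨a * c - b * d * n, a * d + b * c + b * d * t, ?_⟩
    simp only [Prod.mk_mul_mk, Int.cast_add, Int.cast_sub, Int.cast_mul]
    ext
    · linear_combination (b * d : ℝ) * (omg k * ht - hn)
    · linear_combination (b * d : ℝ) * (omg' k * ht - hn)

lemma Nm_mul (x y : R k) : Nm k (x * y) = Nm k x * Nm k y := by
  simp only [Nm, Subring.coe_mul, Prod.fst_mul, Prod.snd_mul]
  ring

lemma exists_int_eq_Nm (z : R k) : ∃ m : ℤ, Nm k z = m := by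
  obtain ⟨t, n, ht, hn⟩ := exists_int_trace_norm k
  obtain ⟨a, b, hab⟩ := exists_eq_int_add_int_mul z
  refine ⟨a ^ 2 + a * b * t + b ^ 2 * n, ?_⟩
  rw [Nm, hab]
  push_cast
  linear_combination (a * b : ℝ) * ht + (b ^ 2 : ℝ) * hn

lemma Nm_sq_eq_one_of_isUnit {d : R k} (hd : IsUnit d) : Nm k d ^ 2 = 1 := by
  obtain ⟨v, hv⟩ := hd.exists_right_inv
  obtain ⟨m, hm⟩ := exists_int_eq_Nm d
  obtain ⟨m', hm'⟩ := exists_int_eq_Nm v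
  have hmm' : m * m' = 1 := by
    have h := Nm_mul d v
    rw [hv, hm, hm'] at h
    exact_mod_cast (show Nm k (1 : R k) = 1 by simp [Nm]) ▸ h.symm
  rw [hm]
  rcases Int.eq_one_or_neg_one_of_mul_eq_one hmm' with rfl | rfl <;> norm_num

lemma irrational_sqrt_of_squarefree (hk : Squarefree k) (hk1 : 1 < k) :
    Irrational (Real.sqrt k) := by
  rw [irrational_sqrt_natCast_iff]
  rintro ⟨m, rfl⟩
  have hm : m = 1 := Nat.isUnit_iff.1 (hk m (dvd_refl _))
  simp [hm] at hk1

lemma irrational_omg (hk : Squarefree k) (hk1 : 1 < k) : Irrational (omg k) := by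
  have h := (irrational_sqrt_of_squarefree hk hk1).natCast_add 1
  unfold omg k0
  split_ifs
  · simpa using h.div_natCast (m := 2) two_ne_zero
  · simpa using h

lemma irrational_omg' (hk : Squarefree k) (hk1 : 1 < k) : Irrational (omg' k) := by
  have h := (irrational_sqrt_of_squarefree hk hk1).natCast_sub 1
  unfold omg' k0
  split_ifs
  · simpa using h.div_natCast (m := 2) two_ne_zero
  · simpa using h

lemma int_add_int_mul_ne_zero {x : ℝ} (hx : Irrational x) {a b : ℤ}
    (hab : a ≠ 0 ∨ b ≠ 0) : (a + b * x : ℝ) ≠ 0 := by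
  rcases eq_or_ne b 0 with rfl | hb
  · simpa using hab
  · exact ((hx.intCast_mul hb).intCast_add a).ne_zero

lemma Nm_ne_zero (hk : Squarefree k) (hk1 : 1 < k) {z : R k} (hz : z ≠ 0) : Nm k z ≠ 0 := by
  obtain ⟨a, b, hab⟩ := exists_eq_int_add_int_mul z
  have hab0 : a ≠ 0 ∨ b ≠ 0 := by
    by_contra! h
    exact hz (Subtype.ext (by simp [hab, h.1, h.2]))
  rw [Nm, hab]
  exact mul_ne_zero (int_add_int_mul_ne_zero (irrational_omg hk hk1) hab0)
    (int_add_int_mul_ne_zero (irrational_omg' hk hk1) hab0)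

lemma one_le_Nm_sq (hk : Squarefree k) (hk1 : 1 < k) {z : R k} (hz : z ≠ 0) :
    1 ≤ Nm k z ^ 2 := by
  obtain ⟨m, hm⟩ := exists_int_eq_Nm z
  have hm0 : m ≠ 0 := by exact_mod_cast hm ▸ Nm_ne_zero hk hk1 hz
  rw [hm]
  exact_mod_cast (one_le_sq_iff_one_le_abs m).2 (Int.one_le_abs hm0)

end RingOfIntegers

lemma HNorm_zero_left (d : ℝ × ℝ) (p : Pt) : HNorm 0 d p = (d.1 * d.2) ^ 2 := by
  simp only [HNorm, Prod.fst_zero, Prod.snd_zero]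
  ring

lemma sq_mul_sq_hh_le_HNorm (c d : ℝ × ℝ) (p : Pt) :
    (c.1 * c.2) ^ 2 * hh p ^ 2 ≤ HNorm c d p := by
  have h₁ := sq_nonneg (c.1 * x1 p + d.1)
  have h₂ := sq_nonneg (c.2 * x2 p + d.2)
  calc (c.1 * c.2) ^ 2 * hh p ^ 2 = (c.1 ^ 2 * y1 p ^ 2) * (c.2 ^ 2 * y2 p ^ 2) := by
        rw [hh]; ring
    _ ≤ HNorm c d p := by unfold HNorm; gcongr <;> linarith

lemma one_le_HNorm_of_mem_Spairs {k : ℕ} (hk : Squarefree k) (hk1 : 1 < k) {cd : R k × R k}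
    (hcd : cd ∈ Spairs k) {p : Pt} (hp : 1 ≤ hh p) : 1 ≤ HNorm cd.1 cd.2 p := by
  obtain ⟨c, d⟩ := cd
  rcases eq_or_ne c 0 with rfl | hc
  · -- `(0, d)` coprime makes `d` a unit, of norm `±1`
    have hd : IsUnit d := by simpa [Spairs, Ideal.span_singleton_eq_top] using hcd
    simp only [ZeroMemClass.coe_zero, HNorm_zero_left]
    exact (Nm_sq_eq_one_of_isUnit hd).ge
  · calc (1 : ℝ) ≤ Nm k c ^ 2 * hh p ^ 2 :=
          one_le_mul_of_one_le_of_one_le (one_le_Nm_sq hk hk1 hc) (one_le_pow₀ hp)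
      _ ≤ HNorm c d p := sq_mul_sq_hh_le_HNorm _ _ p

lemma mem_F0_of_one_le_hh {k : ℕ} (hk : Squarefree k) (hk1 : 1 < k) {p : Pt} (hp : p ∈ HH)
    (hh1 : 1 ≤ hh p) : p ∈ F0 k :=
  ⟨hp, fun _ hcd => one_le_HNorm_of_mem_Spairs hk hk1 hcd hh1⟩

@[fun_prop] lemma continuous_y1 : Continuous y1 := continuous_snd.snd.fst
@[fun_prop] lemma continuous_y2 : Continuous y2 := continuous_snd.snd.snd

lemma continuous_s1 (k : ℕ) : Continuous (s1 k) := by unfold s1 x1 x2; fun_prop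
lemma continuous_s2 (k : ℕ) : Continuous (s2 k) := by unfold s2 x1 x2; fun_prop
lemma continuous_hh : Continuous hh := by unfold hh; fun_prop

lemma continuousAt_rr {p : Pt} (hp : p ∈ HH) : ContinuousAt rr p :=
  continuous_y1.continuousAt.div continuous_y2.continuousAt hp.2.ne'

lemma eventually_mem_HH {p : Pt} (hp : p ∈ HH) : ∀ᶠ q in nhds p, q ∈ HH :=
  (continuousAt_const.eventually_lt continuous_y1.continuousAt hp.1).and
    (continuousAt_const.eventually_lt continuous_y2.continuousAt hp.2)

theorem mem_F_of_secureHeight_general (k : ℕ) (hk : Squarefree k) (hk1 : 1 < k)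
    (e : (R k)ˣ) (p : Pt) (hp : p ∈ HH) :
    (|s1 k p| ≤ 1 / 2 → |s2 k p| ≤ 1 / 2 →
      (eps k e ^ 2)⁻¹ ≤ rr p → rr p ≤ eps k e ^ 2 → 1 ≤ hh p →
        p ∈ F k (eps k e)) ∧
    (|s1 k p| < 1 / 2 → |s2 k p| < 1 / 2 →
      (eps k e ^ 2)⁻¹ < rr p → rr p < eps k e ^ 2 → 1 < hh p →
        p ∈ interior (F k (eps k e))) := by
  have mem_F : ∀ q ∈ HH, |s1 k q| ≤ 1 / 2 → |s2 k q| ≤ 1 / 2 →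
      (eps k e ^ 2)⁻¹ ≤ rr q → rr q ≤ eps k e ^ 2 → 1 ≤ hh q → q ∈ F k (eps k e) :=
    fun q hq hs1 hs2 hr1 hr2 hh1 =>
      ⟨⟨hq, hs1, hs2, hr1, hr2⟩, mem_F0_of_one_le_hh hk hk1 hq hh1⟩
  refine ⟨mem_F p hp, fun hs1 hs2 hr1 hr2 hh1 => ?_⟩
  have hrr := continuousAt_rr hp
  rw [mem_interior_iff_mem_nhds]
  filter_upwards [eventually_mem_HH hp,
    (continuous_s1 k).abs.continuousAt.eventually_lt continuousAt_const hs1,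
    (continuous_s2 k).abs.continuousAt.eventually_lt continuousAt_const hs2,
    continuousAt_const.eventually_lt hrr hr1, hrr.eventually_lt continuousAt_const hr2,
    continuousAt_const.eventually_lt continuous_hh.continuousAt hh1]
    with q hq hs1 hs2 hr1 hr2 hh1
  exact mem_F q hq hs1.le hs2.le hr1.le hr2.le hh1.le

/-- If `Z = (s₁,s₂,r,h) ∈ H²×H²` with `|s₁| ≤ 1/2`, `|s₂| ≤ 1/2`,
`ε₀⁻² ≤ r ≤ ε₀²` and `h ≥ 1`, then `Z ∈ F`; moreover if all four inequalities are strict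
then `Z` lies in the interior of `F`. -/
theorem mem_F_of_secureHeight (k : ℕ) (hk : Squarefree k) (hk1 : 1 < k)
    (e : (R k)ˣ) (he : IsFundUnit k e) (p : Pt) (hp : p ∈ HH) :
    (|s1 k p| ≤ 1 / 2 → |s2 k p| ≤ 1 / 2 →
      (eps k e ^ 2)⁻¹ ≤ rr p → rr p ≤ eps k e ^ 2 → 1 ≤ hh p →
        p ∈ F k (eps k e)) ∧
    (|s1 k p| < 1 / 2 → |s2 k p| < 1 / 2 →
      (eps k e ^ 2)⁻¹ < rr p → rr p < eps k e ^ 2 → 1 < hh p →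
        p ∈ interior (F k (eps k e))) :=
  mem_F_of_secureHeight_general k hk hk1 e p hp

end Hilbert
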